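/- arXiv:2501.09243 — 10 statements merged into one kernel-verified Lean document; each statement's English description precedes it below -/
import Mathlib

section
/- Let & be a left continuous t-norm on [0,1] (a commutative, associative, monotone binary operation with unit 1 that preserves suprema in each variable). If for all p,q,u in [0,1] we have (p&q) ∧ u = ((p∧u)&q) ∨ (p&(q∧u)), then for all p,u in [0,1], u ≤ p&p implies u&p = u. -/
instance : Fact ((0:ℝ) ≤ 1) := ⟨zero_le_one⟩

open unitInterval

/-! Taking `q = ⊤` in the distributivity law gives
`x ⊓ y = (x ⊓ y) ⊔ op x y`, so `op x y ≤ x ⊓ y`. Taking `q = p`, the hypothesis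
`u ≤ op p p` turns the law into `u = op (p ⊓ u) p`; hence `u ≤ p`, and then `u = op u p`. -/

section DistribOp

variable {α : Type*} [Lattice α] [OrderTop α] {op : α → α → α}

theorem op_le_inf_of_distrib (hcomm : ∀ x y, op x y = op y x) (hone : ∀ x, op ⊤ x = x)
    (hdist : ∀ p q u, op p q ⊓ u = op (p ⊓ u) q ⊔ op p (q ⊓ u)) (x y : α) :
    op x y ≤ x ⊓ y := by
  have h := hdist x ⊤ y
  rw [hcomm x ⊤, hcomm (x ⊓ y) ⊤, hone, hone, top_inf_eq] at h
  exact h ▸ le_sup_right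

theorem op_eq_self_of_le_op_self_of_distrib (hcomm : ∀ x y, op x y = op y x)
    (hone : ∀ x, op ⊤ x = x) (hdist : ∀ p q u, op p q ⊓ u = op (p ⊓ u) q ⊔ op p (q ⊓ u))
    {p u : α} (h : u ≤ op p p) : op u p = u := by
  have key : op (p ⊓ u) p = u := by
    have hd := hdist p p u
    rw [inf_eq_right.mpr h, hcomm p (p ⊓ u), sup_idem] at hd
    exact hd.symm
  have hup : u ≤ p := key ▸ (op_le_inf_of_distrib hcomm hone hdist _ _).trans inf_le_right
  rwa [inf_eq_right.mpr hup] at key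

end DistribOp

theorem stmt0_general (op : I → I → I)
    (hcomm : ∀ x y, op x y = op y x)
    (hone : ∀ x, op 1 x = x)
    (hdist : ∀ p q u, op p q ⊓ u = op (p ⊓ u) q ⊔ op p (q ⊓ u)) :
    ∀ p u : I, u ≤ op p p → op u p = u :=
  fun _ _ => op_eq_self_of_le_op_self_of_distrib hcomm hone hdist

theorem stmt0 (op : I → I → I)
    (hcomm : ∀ x y, op x y = op y x)
    (hassoc : ∀ x y z, op (op x y) z = op x (op y z))
    (hmono : ∀ x y z w, x ≤ y → z ≤ w → op x z ≤ op y w)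
    (hone : ∀ x, op 1 x = x)
    (hlc : ∀ (x : I) (S : Set I), op x (sSup S) = sSup (op x '' S))
    (hdist : ∀ p q u, op p q ⊓ u = op (p ⊓ u) q ⊔ op p (q ⊓ u)) :
    ∀ p u : I, u ≤ op p p → op u p = u :=
  stmt0_general op hcomm hone hdist
end

section
/- Let & be a left continuous t-norm on [0,1], and let a be an idempotent element of &. Define â = sup{x ∈ [0,1] : x&x = a}. Then â & â = a, i.e. â is the largest element whose &-square equals a. -/
open unitInterval

/-!
Any two square roots `x, y` of `a` satisfy `x & y = a`: if `x ≤ y`, monotonicity squeezes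
`x & y` between `x & x = a` and `y & y = a`. Left continuity then passes to the supremum `â` of
the square roots, first in one factor (`â & x = a` for every square root `x`) and then in the
other (`â & â = a`).
-/

theorem op_eq_of_op_self_eq_of_op_self_eq {α : Type*} [LinearOrder α] {op : α → α → α}
    (hmono : ∀ x y z w, x ≤ y → z ≤ w → op x z ≤ op y w) {a x y : α}
    (hx : op x x = a) (hy : op y y = a) : op x y = a := by
  rcases le_total x y with h | h
  · exact le_antisymm (hy ▸ hmono _ _ _ _ h le_rfl) (hx ▸ hmono _ _ _ _ le_rfl h)
  · exact le_antisymm (hx ▸ hmono _ _ _ _ le_rfl h) (hy ▸ hmono _ _ _ _ h le_rfl)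

theorem op_sSup_eq_of_forall_op_eq {α : Type*} [CompleteLattice α] {op : α → α → α}
    (hlc : ∀ (x : α) (S : Set α), op x (sSup S) = sSup (op x '' S)) {S : Set α}
    (hS : S.Nonempty) {x a : α} (h : ∀ y ∈ S, op x y = a) : op x (sSup S) = a := by
  rw [hlc, Set.image_congr h, hS.image_const, sSup_singleton]

theorem stmt2_general (op : I → I → I)
    (hcomm : ∀ x y, op x y = op y x)
    (hmono : ∀ x y z w, x ≤ y → z ≤ w → op x z ≤ op y w)
    (hlc : ∀ (x : I) (S : Set I), op x (sSup S) = sSup (op x '' S))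
    (a : I) (ha : op a a = a) :
    op (sSup {x : I | op x x = a}) (sSup {x : I | op x x = a}) = a ∧
      ∀ x : I, op x x = a → x ≤ sSup {x : I | op x x = a} := by
  set S : Set I := {x : I | op x x = a}
  have hS : S.Nonempty := ⟨a, ha⟩
  have hsSup_op : ∀ x ∈ S, op (sSup S) x = a := fun x hx => by
    rw [hcomm]
    exact op_sSup_eq_of_forall_op_eq hlc hS fun y hy =>
      op_eq_of_op_self_eq_of_op_self_eq hmono hx hy
  exact ⟨op_sSup_eq_of_forall_op_eq hlc hS hsSup_op, fun x hx => le_sSup hx⟩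

theorem stmt2 (op : I → I → I)
    (hcomm : ∀ x y, op x y = op y x)
    (hassoc : ∀ x y z, op (op x y) z = op x (op y z))
    (hmono : ∀ x y z w, x ≤ y → z ≤ w → op x z ≤ op y w)
    (hone : ∀ x, op 1 x = x)
    (hlc : ∀ (x : I) (S : Set I), op x (sSup S) = sSup (op x '' S))
    (hcond : ∀ p u : I, u ≤ op p p → op u p = u)
    (a : I) (ha : op a a = a) :
    op (sSup {x : I | op x x = a}) (sSup {x : I | op x x = a}) = a ∧
      ∀ x : I, op x x = a → x ≤ sSup {x : I | op x x = a} :=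
  stmt2_general op hcomm hmono hlc a ha
end

section
/- Let & be a left continuous t-norm on [0,1] such that for all p,u ∈ [0,1], u ≤ p&p implies u&p = u. If a < b are two idempotent elements, and â = sup{x : x&x = a}, b̂ = sup{x : x&x = b}, then â < b, and consequently the intervals [a,â] and [b,b̂] are disjoint. -/
/-!
Let `S = {x | x & x = a}`. Within the chain `S`, `x & y ≤ max x y & max x y = a`, and left
continuity in both arguments (by commutativity) gives `sup S & sup S = sup_{x, y ∈ S} x & y ≤ a`.
Hence `b ≤ sup S` would force `b = b & b ≤ a`.
-/

open unitInterval

section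

variable {α : Type*} [CompleteLinearOrder α] (op : α → α → α)

theorem op_le_of_op_self_le (hmono : ∀ x y z w, x ≤ y → z ≤ w → op x z ≤ op y w)
    {x y c : α} (hx : op x x ≤ c) (hy : op y y ≤ c) : op x y ≤ c := by
  rcases le_total x y with h | h
  · exact (hmono _ _ _ _ h le_rfl).trans hy
  · exact (hmono _ _ _ _ le_rfl h).trans hx

theorem op_sSup_sSup_le (hcomm : ∀ x y, op x y = op y x)
    (hlc : ∀ (x : α) (S : Set α), op x (sSup S) = sSup (op x '' S))
    {S T : Set α} {c : α} (h : ∀ x ∈ S, ∀ y ∈ T, op x y ≤ c) :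
    op (sSup S) (sSup T) ≤ c := by
  rw [hlc]
  refine sSup_le ?_
  rintro _ ⟨y, hy, rfl⟩
  rw [hcomm, hlc]
  refine sSup_le ?_
  rintro _ ⟨x, hx, rfl⟩
  rw [hcomm]
  exact h x hx y hy

theorem op_sSup_self_le (hcomm : ∀ x y, op x y = op y x)
    (hmono : ∀ x y z w, x ≤ y → z ≤ w → op x z ≤ op y w)
    (hlc : ∀ (x : α) (S : Set α), op x (sSup S) = sSup (op x '' S))
    {S : Set α} {c : α} (hS : ∀ x ∈ S, op x x ≤ c) : op (sSup S) (sSup S) ≤ c :=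
  op_sSup_sSup_le op hcomm hlc fun x hx y hy => op_le_of_op_self_le op hmono (hS x hx) (hS y hy)

end

theorem stmt3_general (op : I → I → I)
    (hcomm : ∀ x y, op x y = op y x)
    (hmono : ∀ x y z w, x ≤ y → z ≤ w → op x z ≤ op y w)
    (hlc : ∀ (x : I) (S : Set I), op x (sSup S) = sSup (op x '' S))
    (a b : I) (hb : op b b = b) (hab : a < b) :
    sSup {x : I | op x x = a} < b ∧
      Set.Icc a (sSup {x : I | op x x = a}) ∩
        Set.Icc b (sSup {x : I | op x x = b}) = ∅ := by
  have hsup : op (sSup {x : I | op x x = a}) (sSup {x : I | op x x = a}) ≤ a :=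
    op_sSup_self_le op hcomm hmono hlc fun x hx => le_of_eq hx
  have hlt : sSup {x : I | op x x = a} < b := by
    by_contra! hle
    have : b ≤ a := hb ▸ (hmono _ _ _ _ hle hle).trans hsup
    exact hab.not_ge this
  refine ⟨hlt, Set.eq_empty_iff_forall_notMem.2 ?_⟩
  rintro x ⟨⟨-, hxa⟩, hbx, -⟩
  exact (hbx.trans hxa).not_gt hlt

theorem stmt3 (op : I → I → I)
    (hcomm : ∀ x y, op x y = op y x)
    (hassoc : ∀ x y z, op (op x y) z = op x (op y z))
    (hmono : ∀ x y z w, x ≤ y → z ≤ w → op x z ≤ op y w)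
    (hone : ∀ x, op 1 x = x)
    (hlc : ∀ (x : I) (S : Set I), op x (sSup S) = sSup (op x '' S))
    (hcond : ∀ p u : I, u ≤ op p p → op u p = u)
    (a b : I) (ha : op a a = a) (hb : op b b = b) (hab : a < b) :
    sSup {x : I | op x x = a} < b ∧
      Set.Icc a (sSup {x : I | op x x = a}) ∩
        Set.Icc b (sSup {x : I | op x x = b}) = ∅ :=
  stmt3_general op hcomm hmono hlc a b hb hab
end

section
/- Let {[aᵢ,bᵢ] ⊆ [0,1)}ᵢ∈I be a family of pairwise disjoint closed intervals, and define p & q = aᵢ if p,q ∈ [aᵢ,bᵢ] for some i ∈ I, and p & q = min(p,q) otherwise. Then & is commutative, associative, monotone in each argument, and has 1 as a unit. -/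
open unitInterval

open Set Function

namespace CollapsedInf

variable {α ι : Type*} [LinearOrder α] {a b : ι → α}

def SameInterval (a b : ι → α) (p q : α) : Prop :=
  ∃ i, p ∈ Icc (a i) (b i) ∧ q ∈ Icc (a i) (b i)

theorem SameInterval.symm {p q : α} (h : SameInterval a b p q) : SameInterval a b q p :=
  let ⟨i, hp, hq⟩ := h
  ⟨i, hq, hp⟩

theorem SameInterval.of_le_of_le {p q r : α} (h : SameInterval a b p r) (hpq : p ≤ q)
    (hqr : q ≤ r) : SameInterval a b p q :=
  let ⟨i, hp, hr⟩ := h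
  ⟨i, hp, hp.1.trans hpq, hqr.trans hr.2⟩

theorem index_eq_of_mem (hd : Pairwise (Disjoint on fun i => Icc (a i) (b i)))
    {i j : ι} {p : α} (hi : p ∈ Icc (a i) (b i)) (hj : p ∈ Icc (a j) (b j)) : i = j :=
  hd.eq (Set.not_disjoint_iff.2 ⟨p, hi, hj⟩)

theorem not_sameInterval_of_mem_of_not_mem
    (hd : Pairwise (Disjoint on fun i => Icc (a i) (b i))) {i : ι}
    {p q : α} (hp : p ∈ Icc (a i) (b i)) (hq : q ∉ Icc (a i) (b i)) :
    ¬ SameInterval a b p q := by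
  rintro ⟨j, hpj, hqj⟩
  exact hq (index_eq_of_mem hd hp hpj ▸ hqj)

structure IsCollapsedInf (a b : ι → α) (op : α → α → α) : Prop where
  apply_of_mem : ∀ i p q, p ∈ Icc (a i) (b i) → q ∈ Icc (a i) (b i) → op p q = a i
  apply_of_not_sameInterval : ∀ p q, ¬ SameInterval a b p q → op p q = p ⊓ q

namespace IsCollapsedInf

variable {op : α → α → α}

theorem comm (hop : IsCollapsedInf a b op) (p q : α) : op p q = op q p := by
  by_cases h : SameInterval a b p q
  · obtain ⟨i, hp, hq⟩ := h
    rw [hop.apply_of_mem i p q hp hq, hop.apply_of_mem i q p hq hp]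
  · rw [hop.apply_of_not_sameInterval p q h,
      hop.apply_of_not_sameInterval q p (fun h' => h h'.symm), inf_comm]

theorem apply_of_mem_of_lt (hop : IsCollapsedInf a b op)
    (hd : Pairwise (Disjoint on fun i => Icc (a i) (b i))) {i : ι} {p q : α}
    (hp : p ∈ Icc (a i) (b i)) (hq : q < a i) : op p q = q := by
  rw [hop.apply_of_not_sameInterval p q
    (not_sameInterval_of_mem_of_not_mem hd hp fun h => h.1.not_gt hq)]
  exact inf_eq_right.2 (hq.le.trans hp.1)

theorem apply_of_mem_of_gt (hop : IsCollapsedInf a b op)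
    (hd : Pairwise (Disjoint on fun i => Icc (a i) (b i))) {i : ι} {p q : α}
    (hp : p ∈ Icc (a i) (b i)) (hq : b i < q) : op p q = p := by
  rw [hop.apply_of_not_sameInterval p q
    (not_sameInterval_of_mem_of_not_mem hd hp fun h => h.2.not_gt hq)]
  exact inf_eq_left.2 (hp.2.trans hq.le)

theorem assoc_of_mem (hop : IsCollapsedInf a b op)
    (hd : Pairwise (Disjoint on fun i => Icc (a i) (b i))) {i : ι} (hab : a i ≤ b i)
    {x y : α} (hx : x ∈ Icc (a i) (b i)) (hy : y ∈ Icc (a i) (b i)) (z : α) :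
    op (op x y) z = op x (op y z) := by
  have ha : a i ∈ Icc (a i) (b i) := ⟨le_rfl, hab⟩
  rw [hop.apply_of_mem i x y hx hy]
  by_cases hz : z ∈ Icc (a i) (b i)
  · rw [hop.apply_of_mem i _ z ha hz, hop.apply_of_mem i y z hy hz,
      hop.apply_of_mem i x _ hx ha]
  · rcases not_and_or.1 hz with hz | hz <;> rw [not_le] at hz
    · rw [hop.apply_of_mem_of_lt hd ha hz, hop.apply_of_mem_of_lt hd hy hz,
        hop.apply_of_mem_of_lt hd hx hz]
    · rw [hop.apply_of_mem_of_gt hd ha hz, hop.apply_of_mem_of_gt hd hy hz,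
        hop.apply_of_mem i x y hx hy]

theorem assoc_of_not_sameInterval_of_le (hop : IsCollapsedInf a b op) {x y z : α}
    (hxy : ¬ SameInterval a b x y) (hyz : ¬ SameInterval a b y z) (hxz : x ≤ z) :
    op (x ⊓ y) z = op x (y ⊓ z) := by
  rcases le_total y x with hyx | hxy'
  · rw [inf_eq_right.2 hyx, inf_eq_left.2 (hyx.trans hxz),
      hop.apply_of_not_sameInterval y z hyz, hop.apply_of_not_sameInterval x y hxy,
      inf_eq_left.2 (hyx.trans hxz), inf_eq_right.2 hyx]
  · rw [inf_eq_left.2 hxy']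
    rcases le_total y z with hyz' | hzy
    · have hxz' : ¬ SameInterval a b x z := fun h => hxy (h.of_le_of_le hxy' hyz')
      rw [inf_eq_left.2 hyz', hop.apply_of_not_sameInterval x z hxz',
        hop.apply_of_not_sameInterval x y hxy, inf_eq_left.2 hxz, inf_eq_left.2 hxy']
    · rw [inf_eq_right.2 hzy]

theorem assoc (hop : IsCollapsedInf a b op)
    (hd : Pairwise (Disjoint on fun i => Icc (a i) (b i))) (hab : ∀ i, a i ≤ b i)
    (x y z : α) : op (op x y) z = op x (op y z) := by
  by_cases hxy : SameInterval a b x y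
  · obtain ⟨i, hx, hy⟩ := hxy
    exact hop.assoc_of_mem hd (hab i) hx hy z
  by_cases hyz : SameInterval a b y z
  · obtain ⟨i, hy, hz⟩ := hyz
    calc op (op x y) z = op z (op y x) := by rw [hop.comm _ z, hop.comm x]
      _ = op (op z y) x := (hop.assoc_of_mem hd (hab i) hz hy x).symm
      _ = op x (op y z) := by rw [hop.comm _ x, hop.comm z]
  rw [hop.apply_of_not_sameInterval x y hxy, hop.apply_of_not_sameInterval y z hyz]
  rcases le_total x z with hxz | hzx
  · exact hop.assoc_of_not_sameInterval_of_le hxy hyz hxz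
  · have hzyx :=
      hop.assoc_of_not_sameInterval_of_le (fun h => hyz h.symm) (fun h => hxy h.symm) hzx
    rw [hop.comm, inf_comm, ← hzyx, hop.comm, inf_comm]

theorem endpoint_le_apply (hop : IsCollapsedInf a b op)
    (hd : Pairwise (Disjoint on fun i => Icc (a i) (b i))) {i : ι} (hab : a i ≤ b i)
    {p q : α} (hp : a i ≤ p) (hq : a i ≤ q) : a i ≤ op p q := by
  by_cases h : SameInterval a b p q
  · obtain ⟨j, hpj, hqj⟩ := h
    rw [hop.apply_of_mem j p q hpj hqj]
    by_contra! hji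
    have hij : i = j := index_eq_of_mem hd ⟨le_rfl, hab⟩ ⟨hji.le, hp.trans hpj.2⟩
    exact hji.ne (congrArg a hij).symm
  · rw [hop.apply_of_not_sameInterval p q h]
    exact le_inf hp hq

theorem apply_mono_left (hop : IsCollapsedInf a b op)
    (hd : Pairwise (Disjoint on fun i => Icc (a i) (b i))) (hab : ∀ i, a i ≤ b i)
    {x y : α} (hxy : x ≤ y) (z : α) : op x z ≤ op y z := by
  by_cases hxz : SameInterval a b x z
  · obtain ⟨i, hx, hz⟩ := hxz
    rw [hop.apply_of_mem i x z hx hz]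
    exact hop.endpoint_le_apply hd (hab i) (hx.1.trans hxy) hz.1
  rw [hop.apply_of_not_sameInterval x z hxz]
  by_cases hyz : SameInterval a b y z
  · obtain ⟨j, hy, hz⟩ := hyz
    rw [hop.apply_of_mem j y z hy hz]
    by_contra! hlt
    exact hxz ⟨j, ⟨(hlt.trans_le inf_le_left).le, hxy.trans hy.2⟩,
      ⟨(hlt.trans_le inf_le_right).le, hz.2⟩⟩
  · rw [hop.apply_of_not_sameInterval y z hyz]
    exact inf_le_inf_right z hxy

theorem apply_mono (hop : IsCollapsedInf a b op)
    (hd : Pairwise (Disjoint on fun i => Icc (a i) (b i))) (hab : ∀ i, a i ≤ b i)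
    {x y z w : α} (hxy : x ≤ y) (hzw : z ≤ w) : op x z ≤ op y w :=
  calc op x z ≤ op y z := hop.apply_mono_left hd hab hxy z
    _ = op z y := hop.comm y z
    _ ≤ op w y := hop.apply_mono_left hd hab hzw y
    _ = op y w := hop.comm w y

theorem top_apply [OrderTop α] (hop : IsCollapsedInf a b op) (hb : ∀ i, b i < ⊤) (x : α) :
    op ⊤ x = x := by
  rw [hop.apply_of_not_sameInterval ⊤ x fun ⟨i, h, _⟩ => (hb i).not_ge h.2, top_inf_eq]

end IsCollapsedInf

end CollapsedInf

theorem stmt4 {ι : Type*} (a b : ι → I)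
    (hab : ∀ i, a i ≤ b i) (hb1 : ∀ i, b i < 1)
    (hdisj : ∀ i j, i ≠ j → Set.Icc (a i) (b i) ∩ Set.Icc (a j) (b j) = ∅)
    (op : I → I → I)
    (hin : ∀ i p q, p ∈ Set.Icc (a i) (b i) → q ∈ Set.Icc (a i) (b i) → op p q = a i)
    (hout : ∀ p q : I, (¬ ∃ i, p ∈ Set.Icc (a i) (b i) ∧ q ∈ Set.Icc (a i) (b i)) →
      op p q = p ⊓ q) :
    (∀ x y, op x y = op y x) ∧
    (∀ x y z, op (op x y) z = op x (op y z)) ∧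
    (∀ x y z w, x ≤ y → z ≤ w → op x z ≤ op y w) ∧
    (∀ x, op 1 x = x ∧ op x 1 = x) := by
  have hop : CollapsedInf.IsCollapsedInf a b op := ⟨hin, hout⟩
  have hd : Pairwise (Disjoint on fun i => Icc (a i) (b i)) :=
    fun i j hij => Set.disjoint_iff_inter_eq_empty.2 (hdisj i j hij)
  refine ⟨hop.comm, hop.assoc hd hab, fun _ _ _ _ => hop.apply_mono hd hab, fun x => ?_⟩
  have h1x : op 1 x = x := hop.top_apply hb1 x
  exact ⟨h1x, hop.comm x 1 ▸ h1x⟩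
end

section
/- Let {[aᵢ,bᵢ] ⊆ [0,1)}ᵢ∈I be a family of pairwise disjoint closed intervals, and define p & q = aᵢ if p,q ∈ [aᵢ,bᵢ] for some i ∈ I, and p & q = min(p,q) otherwise. Then for all p,q,u ∈ [0,1], (p&q) ∧ u = ((p∧u)&q) ∨ (p&(q∧u)). -/
open unitInterval

/-! Both sides of the identity are `≤ p ⊓ q ⊓ u`, since `op` never exceeds the minimum.
If `p` and `q` lie in a common interval `[aᵢ, bᵢ]`, then either `aᵢ ≤ u`, and cutting `p` or `q`
at `u` keeps it in `[aᵢ, bᵢ]`, or `u < aᵢ`, and both cuts equal `u`, which shares no interval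
with `p` or `q`. Otherwise at least one of the pairs `(p ⊓ u, q)`, `(p, q ⊓ u)` shares no interval:
if both did, `u` would lie below `p` and `q` and in the intervals of both pairs, which disjointness
forces to coincide, so `p` and `q` would share an interval after all. -/

section

open Set

variable {α ι : Type*}

def SameInterval [Preorder α] (a b : ι → α) (p q : α) : Prop :=
  ∃ i, p ∈ Icc (a i) (b i) ∧ q ∈ Icc (a i) (b i)

def IsIntervalMin [SemilatticeInf α] (a b : ι → α) (op : α → α → α) : Prop :=
  (∀ i p q, p ∈ Icc (a i) (b i) → q ∈ Icc (a i) (b i) → op p q = a i) ∧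
    ∀ p q, ¬ SameInterval a b p q → op p q = p ⊓ q

theorem SameInterval.symm [Preorder α] {a b : ι → α} {p q : α} (h : SameInterval a b p q) :
    SameInterval a b q p :=
  let ⟨i, hp, hq⟩ := h
  ⟨i, hq, hp⟩

theorem eq_of_mem_Icc_of_mem_Icc [Preorder α] {a b : ι → α}
    (hd : Pairwise fun i j => Disjoint (Icc (a i) (b i)) (Icc (a j) (b j))) {x : α} {j k : ι}
    (hj : x ∈ Icc (a j) (b j)) (hk : x ∈ Icc (a k) (b k)) : j = k :=
  hd.eq (not_disjoint_iff.2 ⟨x, hj, hk⟩)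

theorem IsIntervalMin.apply_le_inf [SemilatticeInf α] {a b : ι → α} {op : α → α → α}
    (hop : IsIntervalMin a b op) (p q : α) : op p q ≤ p ⊓ q := by
  by_cases h : SameInterval a b p q
  · obtain ⟨i, hp, hq⟩ := h
    exact (hop.1 i p q hp hq).trans_le (le_inf hp.1 hq.1)
  · exact (hop.2 p q h).le

section LinearOrder

variable [LinearOrder α] {a b : ι → α} {op : α → α → α}
  (hd : Pairwise fun i j => Disjoint (Icc (a i) (b i)) (Icc (a j) (b j)))
include hd

theorem not_sameInterval_of_lt_left {i : ι} {q u : α} (hq : q ∈ Icc (a i) (b i)) (hu : u < a i) :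
    ¬ SameInterval a b u q := by
  rintro ⟨j, huj, hqj⟩
  obtain rfl := eq_of_mem_Icc_of_mem_Icc hd hqj hq
  exact hu.not_ge huj.1

theorem not_sameInterval_inf_left_or_inf_right {p q : α} (h : ¬ SameInterval a b p q) (u : α) :
    ¬ SameInterval a b (p ⊓ u) q ∨ ¬ SameInterval a b p (q ⊓ u) := by
  rcases le_total p u with hpu | hup
  · exact .inl (by rwa [inf_eq_left.2 hpu])
  rcases le_total q u with hqu | huq
  · exact .inr (by rwa [inf_eq_left.2 hqu])
  rw [inf_eq_right.2 hup, inf_eq_right.2 huq, or_iff_not_and_not, not_not, not_not]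
  rintro ⟨⟨j, huj, hqj⟩, ⟨k, hpk, huk⟩⟩
  obtain rfl := eq_of_mem_Icc_of_mem_Icc hd huj huk
  exact h ⟨j, hpk, hqj⟩

theorem IsIntervalMin.inf_eq_of_mem (hop : IsIntervalMin a b op) {i : ι} {p q : α}
    (hp : p ∈ Icc (a i) (b i)) (hq : q ∈ Icc (a i) (b i)) (u : α) :
    a i ⊓ u = op (p ⊓ u) q ⊔ op p (q ⊓ u) := by
  rcases le_or_gt (a i) u with hau | hua
  · have hpu : p ⊓ u ∈ Icc (a i) (b i) := ⟨le_inf hp.1 hau, inf_le_left.trans hp.2⟩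
    have hqu : q ⊓ u ∈ Icc (a i) (b i) := ⟨le_inf hq.1 hau, inf_le_left.trans hq.2⟩
    rw [hop.1 i _ q hpu hq, hop.1 i p _ hp hqu, inf_eq_left.2 hau, sup_idem]
  · have hup : u ≤ p := hua.le.trans hp.1
    have huq : u ≤ q := hua.le.trans hq.1
    have hsep_q := not_sameInterval_of_lt_left hd hq hua
    have hsep_p := mt SameInterval.symm (not_sameInterval_of_lt_left hd hp hua)
    rw [inf_eq_right.2 hup, inf_eq_right.2 huq, hop.2 u q hsep_q, hop.2 p u hsep_p,
      inf_eq_right.2 hua.le, inf_eq_left.2 huq, inf_eq_right.2 hup, sup_idem]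

theorem IsIntervalMin.inf_eq_of_not_sameInterval (hop : IsIntervalMin a b op) {p q : α}
    (h : ¬ SameInterval a b p q) (u : α) :
    p ⊓ q ⊓ u = op (p ⊓ u) q ⊔ op p (q ⊓ u) := by
  have hleft : op (p ⊓ u) q ≤ p ⊓ q ⊓ u := (hop.apply_le_inf _ _).trans_eq (inf_right_comm p u q)
  have hright : op p (q ⊓ u) ≤ p ⊓ q ⊓ u := (hop.apply_le_inf _ _).trans_eq (inf_assoc p q u).symm
  rcases not_sameInterval_inf_left_or_inf_right hd h u with h' | h'
  · rw [hop.2 _ q h', inf_right_comm p u q, sup_eq_left.2 hright]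
  · rw [hop.2 p _ h', ← inf_assoc, sup_eq_right.2 hleft]

end LinearOrder

end

theorem stmt5_general {ι : Type*} (a b : ι → I)
    (hdisj : ∀ i j, i ≠ j → Set.Icc (a i) (b i) ∩ Set.Icc (a j) (b j) = ∅)
    (op : I → I → I)
    (hin : ∀ i p q, p ∈ Set.Icc (a i) (b i) → q ∈ Set.Icc (a i) (b i) → op p q = a i)
    (hout : ∀ p q : I, (¬ ∃ i, p ∈ Set.Icc (a i) (b i) ∧ q ∈ Set.Icc (a i) (b i)) →
      op p q = p ⊓ q) :
    ∀ p q u : I, op p q ⊓ u = op (p ⊓ u) q ⊔ op p (q ⊓ u) := by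
  have hop : IsIntervalMin a b op := ⟨hin, hout⟩
  have hd : Pairwise fun i j => Disjoint (Set.Icc (a i) (b i)) (Set.Icc (a j) (b j)) :=
    fun i j hij => Set.disjoint_iff_inter_eq_empty.2 (hdisj i j hij)
  intro p q u
  by_cases h : SameInterval a b p q
  · obtain ⟨i, hp, hq⟩ := h
    rw [hin i p q hp hq]
    exact hop.inf_eq_of_mem hd hp hq u
  · rw [hout p q h]
    exact hop.inf_eq_of_not_sameInterval hd h u

theorem stmt5 {ι : Type*} (a b : ι → I)
    (hab : ∀ i, a i ≤ b i) (hb1 : ∀ i, b i < 1)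
    (hdisj : ∀ i j, i ≠ j → Set.Icc (a i) (b i) ∩ Set.Icc (a j) (b j) = ∅)
    (op : I → I → I)
    (hin : ∀ i p q, p ∈ Set.Icc (a i) (b i) → q ∈ Set.Icc (a i) (b i) → op p q = a i)
    (hout : ∀ p q : I, (¬ ∃ i, p ∈ Set.Icc (a i) (b i) ∧ q ∈ Set.Icc (a i) (b i)) →
      op p q = p ⊓ q) :
    ∀ p q u : I, op p q ⊓ u = op (p ⊓ u) q ⊔ op p (q ⊓ u) :=
  stmt5_general a b hdisj op hin hout
end

section
/- Let & be a left continuous t-norm on [0,1] satisfying (p&q) ∧ u = ((p∧u)&q) ∨ (p&(q∧u)) for all p,q,u. Then for any set X and any map r : X×X→[0,1] with 1 ≤ r(x,x) and r(y,z)&r(x,y) ≤ r(x,z) for all x,y,z (i.e., (X,r) is a [0,1]-category), the identity (p&q) ∧ r(x,z) = ⨆_{y∈X} (p ∧ r(y,z)) & (q ∧ r(x,y)) holds for all p,q ∈ [0,1] and x,z ∈ X. -/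
open unitInterval

section CompleteLattice

variable {α X : Type*} [CompleteLattice α] (op : α → α → α) (r : X → X → α)

theorem iSup_op_inf_le_op_inf (hmono : ∀ x y z w, x ≤ y → z ≤ w → op x z ≤ op y w)
    (htrans : ∀ x y z, op (r y z) (r x y) ≤ r x z) (p q : α) (x z : X) :
    ⨆ y, op (p ⊓ r y z) (q ⊓ r x y) ≤ op p q ⊓ r x z :=
  iSup_le fun y => le_inf (hmono _ _ _ _ inf_le_left inf_le_left)
    ((hmono _ _ _ _ inf_le_right inf_le_right).trans (htrans x y z))

/-- The two joinands given by the distributive law are the terms `y = x` and `y = z` of the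
supremum. -/
theorem op_inf_le_iSup_op_inf (hdist : ∀ p q u, op p q ⊓ u = op (p ⊓ u) q ⊔ op p (q ⊓ u))
    (hrefl : ∀ x, r x x = ⊤) (p q : α) (x z : X) :
    op p q ⊓ r x z ≤ ⨆ y, op (p ⊓ r y z) (q ⊓ r x y) := by
  rw [hdist]
  refine sup_le (le_iSup_of_le x ?_) (le_iSup_of_le z ?_) <;> rw [hrefl, inf_top_eq]

end CompleteLattice

theorem stmt6_general (op : I → I → I)
    (hmono : ∀ x y z w, x ≤ y → z ≤ w → op x z ≤ op y w)
    (hdist : ∀ p q u, op p q ⊓ u = op (p ⊓ u) q ⊔ op p (q ⊓ u))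
    {X : Type*} (r : X → X → I)
    (hrefl : ∀ x, 1 ≤ r x x)
    (htrans : ∀ x y z, op (r y z) (r x y) ≤ r x z) :
    ∀ (p q : I) (x z : X),
      op p q ⊓ r x z = ⨆ y : X, op (p ⊓ r y z) (q ⊓ r x y) := fun p q x z =>
  le_antisymm (op_inf_le_iSup_op_inf op r hdist (fun x => top_le_iff.1 (hrefl x)) p q x z)
    (iSup_op_inf_le_op_inf op r hmono htrans p q x z)

theorem stmt6 (op : I → I → I)
    (hcomm : ∀ x y, op x y = op y x)
    (hassoc : ∀ x y z, op (op x y) z = op x (op y z))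
    (hmono : ∀ x y z w, x ≤ y → z ≤ w → op x z ≤ op y w)
    (hone : ∀ x, op 1 x = x)
    (hlc : ∀ (x : I) (S : Set I), op x (sSup S) = sSup (op x '' S))
    (hdist : ∀ p q u, op p q ⊓ u = op (p ⊓ u) q ⊔ op p (q ⊓ u))
    {X : Type*} (r : X → X → I)
    (hrefl : ∀ x, 1 ≤ r x x)
    (htrans : ∀ x y z, op (r y z) (r x y) ≤ r x z) :
    ∀ (p q : I) (x z : X),
      op p q ⊓ r x z = ⨆ y : X, op (p ⊓ r y z) (q ⊓ r x y) :=
  stmt6_general op hmono hdist r hrefl htrans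
end

section
/- Let Q be a commutative quantale on a complete lattice with unit k, and suppose that for all p,q,u ∈ Q, (p&q) ∧ u = ((p∧u)&(q∧k)) ∨ ((p∧k)&(q∧u)). If the underlying lattice of Q is [0,1] with its usual order, then k = 1 (the quantale is integral). -/
open unitInterval

section LinearQuantale

variable {α : Type*} [CompleteLinearOrder α] {op : α → α → α} {k : α}

theorem top_op_eq_of_lt_unit (hunit : ∀ x, op k x = x)
    (hdist : ∀ p q u : α, op p q ⊓ u = op (p ⊓ u) (q ⊓ k) ⊔ op (p ⊓ k) (q ⊓ u))
    {q : α} (hq : q < k) : op ⊤ q = q := by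
  have h := hdist ⊤ q k
  rw [top_inf_eq, inf_of_le_left hq.le, hunit, sup_idem] at h
  rcases le_total (op ⊤ q) k with hle | hle
  · rwa [inf_of_le_left hle] at h
  · rw [inf_of_le_right hle] at h
    exact absurd h.symm hq.ne

theorem top_op_unit [DenselyOrdered α]
    (hsup : ∀ (x : α) (S : Set α), op x (sSup S) = sSup (op x '' S))
    (hunit : ∀ x, op k x = x)
    (hdist : ∀ p q u : α, op p q ⊓ u = op (p ⊓ u) (q ⊓ k) ⊔ op (p ⊓ k) (q ⊓ u)) :
    op ⊤ k = k := by
  have hIio : op ⊤ '' Set.Iio k = Set.Iio k :=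
    Set.EqOn.image_eq_self fun _ hq => top_op_eq_of_lt_unit hunit hdist hq
  calc op ⊤ k = op ⊤ (sSup (Set.Iio k)) := by rw [isLUB_Iio.sSup_eq]
    _ = sSup (Set.Iio k) := by rw [hsup, hIio]
    _ = k := isLUB_Iio.sSup_eq

theorem unit_eq_top [DenselyOrdered α] (hcomm : ∀ x y, op x y = op y x)
    (hsup : ∀ (x : α) (S : Set α), op x (sSup S) = sSup (op x '' S))
    (hunit : ∀ x, op k x = x)
    (hdist : ∀ p q u : α, op p q ⊓ u = op (p ⊓ u) (q ⊓ k) ⊔ op (p ⊓ k) (q ⊓ u)) :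
    k = ⊤ :=
  calc k = op ⊤ k := (top_op_unit hsup hunit hdist).symm
    _ = op k ⊤ := hcomm ⊤ k
    _ = ⊤ := hunit ⊤

end LinearQuantale

theorem stmt7_general (op : I → I → I) (k : I)
    (hcomm : ∀ x y, op x y = op y x)
    (hsup : ∀ (x : I) (S : Set I), op x (sSup S) = sSup (op x '' S))
    (hunit : ∀ x, op k x = x)
    (hdist : ∀ p q u : I,
      op p q ⊓ u = op (p ⊓ u) (q ⊓ k) ⊔ op (p ⊓ k) (q ⊓ u)) :
    k = 1 :=
  unit_eq_top hcomm hsup hunit hdist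

theorem stmt7 (op : I → I → I) (k : I)
    (hcomm : ∀ x y, op x y = op y x)
    (hassoc : ∀ x y z, op (op x y) z = op x (op y z))
    (hsup : ∀ (x : I) (S : Set I), op x (sSup S) = sSup (op x '' S))
    (hunit : ∀ x, op k x = x)
    (hdist : ∀ p q u : I,
      op p q ⊓ u = op (p ⊓ u) (q ⊓ k) ⊔ op (p ⊓ k) (q ⊓ u)) :
    k = 1 :=
  stmt7_general op k hcomm hsup hunit hdist
end

section
/- Let Q be a commutative quantale on the complete lattice [0,1] with unit k, satisfying (p&q) ∧ u = ((p∧u)&(q∧k)) ∨ ((p∧k)&(q∧u)) for all p,q,u. Then (p&p)&(p&p) = p&p for all p ∈ [0,1], i.e. the &-square of every element is idempotent. -/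
open unitInterval

section UnitDistributive

variable {α : Type*} [Lattice α] {op : α → α → α} {k : α}

theorem op_self_le_of_le_unit (hunit_right : ∀ x, op x k = x)
    (hdist : ∀ p q u, op p q ⊓ u = op (p ⊓ u) (q ⊓ k) ⊔ op (p ⊓ k) (q ⊓ u))
    {p : α} (hp : p ≤ k) : op p p ≤ p := by
  have h := hdist p k p
  rw [hunit_right, inf_idem, inf_idem, hunit_right, inf_of_le_left hp, inf_of_le_right hp] at h
  exact le_sup_right.trans h.ge

theorem op_self_eq_op_op_self_of_le_unit (hcomm : ∀ x y, op x y = op y x)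
    (hunit_right : ∀ x, op x k = x)
    (hdist : ∀ p q u, op p q ⊓ u = op (p ⊓ u) (q ⊓ k) ⊔ op (p ⊓ k) (q ⊓ u))
    {p : α} (hp : p ≤ k) : op p p = op (op p p) p := by
  have h := hdist p p (op p p)
  rwa [inf_idem, inf_of_le_right (op_self_le_of_le_unit hunit_right hdist hp),
    inf_of_le_left hp, hcomm p (op p p), sup_idem] at h

theorem op_op_self_op_self_of_le_unit (hcomm : ∀ x y, op x y = op y x)
    (hassoc : ∀ x y z, op (op x y) z = op x (op y z)) (hunit_right : ∀ x, op x k = x)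
    (hdist : ∀ p q u, op p q ⊓ u = op (p ⊓ u) (q ⊓ k) ⊔ op (p ⊓ k) (q ⊓ u))
    {p : α} (hp : p ≤ k) : op (op p p) (op p p) = op p p := by
  have hsq := op_self_eq_op_op_self_of_le_unit hcomm hunit_right hdist hp
  calc op (op p p) (op p p) = op (op (op p p) p) p := (hassoc _ p p).symm
    _ = op p p := by rw [← hsq, ← hsq]

theorem le_op_self_of_unit_le (hunit_left : ∀ x, op k x = x) (hunit_right : ∀ x, op x k = x)
    (hdist : ∀ p q u, op p q ⊓ u = op (p ⊓ u) (q ⊓ k) ⊔ op (p ⊓ k) (q ⊓ u))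
    {p : α} (hp : k ≤ p) : p ≤ op p p := by
  have h := hdist p p p
  rw [inf_idem, inf_of_le_right hp, hunit_right, hunit_left, sup_idem] at h
  exact h.ge.trans inf_le_left

theorem op_self_eq_self_of_unit_le (hunit_left : ∀ x, op k x = x)
    (hunit_right : ∀ x, op x k = x)
    (hdist : ∀ p q u, op p q ⊓ u = op (p ⊓ u) (q ⊓ k) ⊔ op (p ⊓ k) (q ⊓ u))
    {p : α} (hp : k ≤ p) : op p p = p := by
  have hge := le_op_self_of_unit_le hunit_left hunit_right hdist hp
  have h := hdist p p (op p p)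
  rw [inf_idem, inf_of_le_right hp, hunit_right, hunit_left, sup_idem, inf_of_le_left hge] at h
  exact le_antisymm h.le hge

end UnitDistributive

theorem stmt8_general (op : I → I → I) (k : I)
    (hcomm : ∀ x y, op x y = op y x)
    (hassoc : ∀ x y z, op (op x y) z = op x (op y z))
    (hunit : ∀ x, op k x = x)
    (hdist : ∀ p q u : I,
      op p q ⊓ u = op (p ⊓ u) (q ⊓ k) ⊔ op (p ⊓ k) (q ⊓ u)) :
    ∀ p : I, op (op p p) (op p p) = op p p := by
  intro p
  have hunit_right : ∀ x, op x k = x := fun x => by rw [hcomm, hunit]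
  rcases le_total p k with hp | hp
  · exact op_op_self_op_self_of_le_unit hcomm hassoc hunit_right hdist hp
  · rw [op_self_eq_self_of_unit_le hunit hunit_right hdist hp,
      op_self_eq_self_of_unit_le hunit hunit_right hdist hp]

theorem stmt8 (op : I → I → I) (k : I)
    (hcomm : ∀ x y, op x y = op y x)
    (hassoc : ∀ x y z, op (op x y) z = op x (op y z))
    (hsup : ∀ (x : I) (S : Set I), op x (sSup S) = sSup (op x '' S))
    (hunit : ∀ x, op k x = x)
    (hdist : ∀ p q u : I,
      op p q ⊓ u = op (p ⊓ u) (q ⊓ k) ⊔ op (p ⊓ k) (q ⊓ u)) :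
    ∀ p : I, op (op p p) (op p p) = op p p :=
  stmt8_general op k hcomm hassoc hunit hdist
end

section
/- Let (X,r) be a [0,1]-category over a left-continuous t-norm. A net {x_λ}_{λ∈D} has an element a as bilimit (meaning r(a,x) = sup_λ inf_{λ≤μ} r(x_μ,x) and r(x,a) = sup_λ inf_{λ≤μ} r(x,x_μ) for all x ∈ X) if and only if sup_λ inf_{λ≤μ} r(a,x_μ) = sup_λ inf_{λ≤μ} r(x_μ,a) = 1. -/
open unitInterval

/-- A \`[0,1]\`-category structure on \`X\`. -/
def IsRCat {X : Type*} (op : I → I → I) (r : X → X → I) : Prop :=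
  (∀ x, r x x = 1) ∧ ∀ x y z, op (r y z) (r x y) ≤ r x z

/-- A \`[0,1]\`-functor. -/
def IsRFunctor {X Y : Type*} (r : X → X → I) (s : Y → Y → I) (f : X → Y) : Prop :=
  ∀ x y, r x y ≤ s (f x) (f y)

/-- \`a\` is a bilimit of the net \`x\` (full definition). -/
def IsBilimit {X D : Type*} [Preorder D] (r : X → X → I) (x : D → X) (a : X) : Prop :=
  (∀ y, r a y = ⨆ l : D, ⨅ m : D, ⨅ _ : l ≤ m, r (x m) y) ∧
  (∀ y, r y a = ⨆ l : D, ⨅ m : D, ⨅ _ : l ≤ m, r y (x m))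

/-- \`a\` is a bilimit of the net \`x\` (sup-inf characterization). -/
def IsBilimitAux {X D : Type*} [Preorder D] (r : X → X → I) (x : D → X) (a : X) : Prop :=
  (⨆ l : D, ⨅ m : D, ⨅ _ : l ≤ m, r a (x m)) = 1 ∧
  (⨆ l : D, ⨅ m : D, ⨅ _ : l ≤ m, r (x m) a) = 1

/-- The net \`x\` is a Cauchy net. -/
def IsCauchyNet {X D : Type*} [Preorder D] (r : X → X → I) (x : D → X) : Prop :=
  (⨆ l : D, ⨅ m : D, ⨅ _ : l ≤ m, ⨅ g : D, ⨅ _ : l ≤ g, r (x m) (x g)) = 1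

/-!
If `⨆ λ, ⨅ μ ≥ λ, r (x μ) a = 1`, then, since `since `&` preserves suprema in each variable` preserves suprema in its second variable,
`r a y = r a y & 1 ≤ ⨆ λ, ⨅ μ ≥ λ, r (x μ) y` by transitivity through `a`. Conversely, if
`⨆ λ, ⨅ μ ≥ λ, r a (x μ) = 1`, then for any two tails a common upper index `μ` gives
`r (x μ) y & r a (x μ) ≤ r a y`, whence `⨆ λ, ⨅ μ ≥ λ, r (x μ) y ≤ r a y`. The second clause
of a bilimit is the first one in the opposite `[0,1]`-category.
-/

section

variable {op : I → I → I} {X D : Type*} [Preorder D] {r : X → X → I}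

theorem op_iSup (hlc : ∀ (x : I) (S : Set I), op x (sSup S) = sSup (op x '' S))
    {ι : Sort*} (b : I) (f : ι → I) : op b (⨆ i, f i) = ⨆ i, op b (f i) := by
  rw [iSup, hlc, ← Set.range_comp, iSup]
  rfl

theorem IsRCat.flip (hcomm : ∀ x y, op x y = op y x) (hr : IsRCat op r) :
    IsRCat op (Function.swap r) :=
  ⟨hr.1, fun x y z => by simpa only [Function.swap, hcomm] using hr.2 z y x⟩

theorem IsRCat.le_iSup_iInf_of_iSup_iInf_eq_one (hr : IsRCat op r) (hone : ∀ b, op b 1 = b)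
    (hmono : ∀ x y z w, x ≤ y → z ≤ w → op x z ≤ op y w)
    (hlc : ∀ (x : I) (S : Set I), op x (sSup S) = sSup (op x '' S))
    {x : D → X} {a : X} (ha : (⨆ l, ⨅ m, ⨅ _ : l ≤ m, r (x m) a) = 1) (y : X) :
    r a y ≤ ⨆ l, ⨅ m, ⨅ _ : l ≤ m, r (x m) y :=
  calc r a y = op (r a y) (⨆ l, ⨅ m, ⨅ _ : l ≤ m, r (x m) a) := by rw [ha, hone]
    _ = ⨆ l, op (r a y) (⨅ m, ⨅ _ : l ≤ m, r (x m) a) := op_iSup hlc _ _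
    _ ≤ ⨆ l, ⨅ m, ⨅ _ : l ≤ m, r (x m) y :=
      iSup_mono fun _ => le_iInf₂ fun m hm =>
        (hmono _ _ _ _ le_rfl (iInf₂_le m hm)).trans (hr.2 _ _ _)

theorem IsRCat.iSup_iInf_le_of_iSup_iInf_eq_one (hr : IsRCat op r) (hone : ∀ b, op b 1 = b)
    (hmono : ∀ x y z w, x ≤ y → z ≤ w → op x z ≤ op y w)
    (hlc : ∀ (x : I) (S : Set I), op x (sSup S) = sSup (op x '' S))
    (hdir : ∀ l l' : D, ∃ m, l ≤ m ∧ l' ≤ m)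
    {x : D → X} {a : X} (ha : (⨆ l, ⨅ m, ⨅ _ : l ≤ m, r a (x m)) = 1) (y : X) :
    (⨆ l, ⨅ m, ⨅ _ : l ≤ m, r (x m) y) ≤ r a y := by
  refine iSup_le fun l => ?_
  have tails : ∀ l', op (⨅ m, ⨅ _ : l ≤ m, r (x m) y) (⨅ m, ⨅ _ : l' ≤ m, r a (x m)) ≤ r a y := by
    intro l'
    obtain ⟨m, hm, hm'⟩ := hdir l l'
    exact (hmono _ _ _ _ (iInf₂_le m hm) (iInf₂_le m hm')).trans (hr.2 _ _ _)
  simpa only [← op_iSup hlc, ha, hone] using iSup_le tails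

theorem IsRCat.eq_iSup_iInf_of_isBilimitAux (hr : IsRCat op r) (hone : ∀ b, op b 1 = b)
    (hmono : ∀ x y z w, x ≤ y → z ≤ w → op x z ≤ op y w)
    (hlc : ∀ (x : I) (S : Set I), op x (sSup S) = sSup (op x '' S))
    (hdir : ∀ l l' : D, ∃ m, l ≤ m ∧ l' ≤ m)
    {x : D → X} {a : X} (h : IsBilimitAux r x a) (y : X) :
    r a y = ⨆ l, ⨅ m, ⨅ _ : l ≤ m, r (x m) y :=
  le_antisymm (hr.le_iSup_iInf_of_iSup_iInf_eq_one hone hmono hlc h.2 y)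
    (hr.iSup_iInf_le_of_iSup_iInf_eq_one hone hmono hlc hdir h.1 y)

end

theorem stmt12_general (op : I → I → I)
    (hcomm : ∀ x y, op x y = op y x)
    (hmono : ∀ x y z w, x ≤ y → z ≤ w → op x z ≤ op y w)
    (hone : ∀ x, op 1 x = x)
    (hlc : ∀ (x : I) (S : Set I), op x (sSup S) = sSup (op x '' S))
    {X : Type*} (r : X → X → I) (hr : IsRCat op r)
    {D : Type*} [Preorder D]
    (hdir : ∀ l l' : D, ∃ m, l ≤ m ∧ l' ≤ m)
    (x : D → X) (a : X) :
    IsBilimit r x a ↔ IsBilimitAux r x a := by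
  have hone' : ∀ b, op b 1 = b := fun b => by rw [hcomm, hone]
  constructor
  · rintro ⟨hleft, hright⟩
    exact ⟨by rw [← hright a, hr.1], by rw [← hleft a, hr.1]⟩
  · intro h
    exact ⟨hr.eq_iSup_iInf_of_isBilimitAux hone' hmono hlc hdir h,
      (hr.flip hcomm).eq_iSup_iInf_of_isBilimitAux hone' hmono hlc hdir ⟨h.2, h.1⟩⟩

theorem stmt12 (op : I → I → I)
    (hcomm : ∀ x y, op x y = op y x)
    (hassoc : ∀ x y z, op (op x y) z = op x (op y z))
    (hmono : ∀ x y z w, x ≤ y → z ≤ w → op x z ≤ op y w)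
    (hone : ∀ x, op 1 x = x)
    (hlc : ∀ (x : I) (S : Set I), op x (sSup S) = sSup (op x '' S))
    {X : Type*} (r : X → X → I) (hr : IsRCat op r)
    {D : Type*} [Preorder D] [Nonempty D]
    (hdir : ∀ l l' : D, ∃ m, l ≤ m ∧ l' ≤ m)
    (x : D → X) (a : X) :
    IsBilimit r x a ↔ IsBilimitAux r x a :=
  stmt12_general op hcomm hmono hone hlc r hr hdir x a
end

section
/- Let & be a left continuous t-norm on [0,1] arising from a family of pairwise disjoint closed intervals {[aᵢ,bᵢ] ⊆ [0,1)} via p&q = aᵢ if p,q ∈ [aᵢ,bᵢ] for some i and p&q = min(p,q) otherwise. Then the set E of idempotent elements strictly less than 1 has supremum 1, and for each p ∈ E and every x ∈ [0,1], p & x = min(p,x). -/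
open unitInterval

open Set

theorem lt_left_of_right_lt_of_mem_Icc {ι α : Type*} [LinearOrder α] {a b : ι → α}
    (hab : ∀ i, a i ≤ b i)
    (hdisj : ∀ i j, i ≠ j → Icc (a i) (b i) ∩ Icc (a j) (b j) = ∅)
    {j k : ι} {u : α} (hu : b j < u) (huk : u ∈ Icc (a k) (b k)) : b j < a k := by
  by_contra! hkj
  have hbk : b j ∈ Icc (a k) (b k) := ⟨hkj, hu.le.trans huk.2⟩
  obtain rfl | hne := eq_or_ne j k
  · exact (huk.2.trans_lt hu).false
  · exact (hdisj j k hne).subset ⟨⟨hab j, le_rfl⟩, hbk⟩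

section OrdinalSum

variable {ι : Type*} {op : I → I → I} {a b : ι → I}

theorem op_self_of_forall_notMem_Icc
    (hout : ∀ p q : I, (¬ ∃ i, p ∈ Icc (a i) (b i) ∧ q ∈ Icc (a i) (b i)) → op p q = p ⊓ q)
    {t : I} (ht : ∀ i, t ∉ Icc (a i) (b i)) : op t t = t := by
  rw [hout t t fun ⟨i, hti, _⟩ => ht i hti, inf_idem]

theorem op_self_left_endpoint (hab : ∀ i, a i ≤ b i)
    (hin : ∀ i p q, p ∈ Icc (a i) (b i) → q ∈ Icc (a i) (b i) → op p q = a i) (i : ι) :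
    op (a i) (a i) = a i :=
  hin i _ _ ⟨le_rfl, hab i⟩ ⟨le_rfl, hab i⟩

theorem mem_Icc_of_op_self_ne
    (hout : ∀ p q : I, (¬ ∃ i, p ∈ Icc (a i) (b i) ∧ q ∈ Icc (a i) (b i)) → op p q = p ⊓ q)
    {t : I} (ht : op t t ≠ t) : ∃ i, t ∈ Icc (a i) (b i) := by
  by_contra! h
  exact ht (op_self_of_forall_notMem_Icc hout h)

theorem exists_op_self_gt (hab : ∀ i, a i ≤ b i) (hb1 : ∀ i, b i < 1)
    (hdisj : ∀ i j, i ≠ j → Icc (a i) (b i) ∩ Icc (a j) (b j) = ∅)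
    (hin : ∀ i p q, p ∈ Icc (a i) (b i) → q ∈ Icc (a i) (b i) → op p q = a i)
    (hout : ∀ p q : I, (¬ ∃ i, p ∈ Icc (a i) (b i) ∧ q ∈ Icc (a i) (b i)) → op p q = p ⊓ q)
    {w : I} (hw : w < 1) : ∃ e, e < 1 ∧ op e e = e ∧ w < e := by
  obtain ⟨t, hwt, ht1⟩ := exists_between hw
  by_cases htt : op t t = t
  · exact ⟨t, ht1, htt, hwt⟩
  obtain ⟨j, htj⟩ := mem_Icc_of_op_self_ne hout htt
  obtain ⟨u, hbu, hu1⟩ := exists_between (hb1 j)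
  have hwu : w < u := hwt.trans_le (htj.2.trans hbu.le)
  by_cases huu : op u u = u
  · exact ⟨u, hu1, huu, hwu⟩
  obtain ⟨k, huk⟩ := mem_Icc_of_op_self_ne hout huu
  have hbak : b j < a k := lt_left_of_right_lt_of_mem_Icc hab hdisj hbu huk
  exact ⟨a k, (hab k).trans_lt (hb1 k), op_self_left_endpoint hab hin k,
    hwt.trans_le (htj.2.trans hbak.le)⟩

theorem op_eq_inf_of_op_self
    (hin : ∀ i p q, p ∈ Icc (a i) (b i) → q ∈ Icc (a i) (b i) → op p q = a i)
    (hout : ∀ p q : I, (¬ ∃ i, p ∈ Icc (a i) (b i) ∧ q ∈ Icc (a i) (b i)) → op p q = p ⊓ q)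
    {p : I} (hpp : op p p = p) (x : I) : op p x = p ⊓ x := by
  by_cases h : ∃ i, p ∈ Icc (a i) (b i) ∧ x ∈ Icc (a i) (b i)
  · obtain ⟨i, hpi, hxi⟩ := h
    have hpa : p = a i := hpp ▸ hin i p p hpi hpi
    rw [hin i p x hpi hxi, ← hpa, inf_eq_left.mpr (hpa ▸ hxi.1)]
  · exact hout p x h

end OrdinalSum

theorem stmt18_general (op : I → I → I)
    {ι : Type*} (a b : ι → I)
    (hab : ∀ i, a i ≤ b i) (hb1 : ∀ i, b i < 1)
    (hdisj : ∀ i j, i ≠ j → Set.Icc (a i) (b i) ∩ Set.Icc (a j) (b j) = ∅)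
    (hin : ∀ i p q, p ∈ Set.Icc (a i) (b i) → q ∈ Set.Icc (a i) (b i) → op p q = a i)
    (hout : ∀ p q : I, (¬ ∃ i, p ∈ Set.Icc (a i) (b i) ∧ q ∈ Set.Icc (a i) (b i)) →
      op p q = p ⊓ q) :
    sSup {p : I | p < 1 ∧ op p p = p} = 1 ∧
      ∀ p : I, p < 1 → op p p = p → ∀ x : I, op p x = p ⊓ x := by
  refine ⟨sSup_eq_of_forall_le_of_forall_lt_exists_gt (fun _ _ => le_one') fun w hw => ?_,
    fun p _ hpp => op_eq_inf_of_op_self hin hout hpp⟩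
  obtain ⟨e, he1, hee, hwe⟩ := exists_op_self_gt hab hb1 hdisj hin hout hw
  exact ⟨e, ⟨he1, hee⟩, hwe⟩

theorem stmt18 (op : I → I → I)
    (hcomm : ∀ x y, op x y = op y x)
    (hassoc : ∀ x y z, op (op x y) z = op x (op y z))
    (hmono : ∀ x y z w, x ≤ y → z ≤ w → op x z ≤ op y w)
    (hone : ∀ x, op 1 x = x)
    (hlc : ∀ (x : I) (S : Set I), op x (sSup S) = sSup (op x '' S))
    {ι : Type*} (a b : ι → I)
    (hab : ∀ i, a i ≤ b i) (hb1 : ∀ i, b i < 1)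
    (hdisj : ∀ i j, i ≠ j → Set.Icc (a i) (b i) ∩ Set.Icc (a j) (b j) = ∅)
    (hin : ∀ i p q, p ∈ Set.Icc (a i) (b i) → q ∈ Set.Icc (a i) (b i) → op p q = a i)
    (hout : ∀ p q : I, (¬ ∃ i, p ∈ Set.Icc (a i) (b i) ∧ q ∈ Set.Icc (a i) (b i)) →
      op p q = p ⊓ q) :
    sSup {p : I | p < 1 ∧ op p p = p} = 1 ∧
      ∀ p : I, p < 1 → op p p = p → ∀ x : I, op p x = p ⊓ x :=
  stmt18_general op a b hab hb1 hdisj hin hout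
end
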